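/- In the twisted Yangian Y_N, if {i,j} ∩ {k,l} = ∅ then [s_{ij}(u), s̃_{kl}(v)] = 0, where S̃(u) = S(u)^{-1} = (s̃_{ij}(u)) is the inverse of the generator matrix S(u) = (s_{ij}(u)). -/

import Mathlib

noncomputable section

namespace TY

variable {A : Type*} [Ring A] [Algebra ℂ A]

/-- For `f(u) = Σ_{r≥0} a_r u^{-r}` (recorded as the power series `Σ a_r x^r` in
`x = u⁻¹`), this is the series `f(-u)`. -/
def negVar (f : PowerSeries A) : PowerSeries A :=
  PowerSeries.mk fun n => ((-1 : ℂ) ^ n) • PowerSeries.coeff n f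

/-- For `f(u) = Σ_{r≥0} a_r u^{-r}`, this is the series `f(u + c)`, expanded again
in powers of `u⁻¹`. -/
def shiftVar (c : ℂ) (f : PowerSeries A) : PowerSeries A :=
  PowerSeries.mk fun n => ∑ r ∈ Finset.range (n + 1),
    ((-1 : ℂ) ^ (n - r) * ((n - 1).choose (n - r) : ℂ) * c ^ (n - r)) •
      PowerSeries.coeff r f

open Classical in
/-- A series in the single variable `u⁻¹`, viewed as a two-variable series placed in
the `k`-th variable. -/
def inVar (k : Fin 2) (f : PowerSeries A) : MvPowerSeries (Fin 2) A := fun m =>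
  if m = Finsupp.single k (m k) then PowerSeries.coeff (m k) f else 0

/-- `f(u)` as a series in the two variables `x = u⁻¹`, `y = v⁻¹`. -/
abbrev inX (f : PowerSeries A) : MvPowerSeries (Fin 2) A := inVar 0 f

/-- `f(v)` as a series in the two variables `x = u⁻¹`, `y = v⁻¹`. -/
abbrev inY (f : PowerSeries A) : MvPowerSeries (Fin 2) A := inVar 1 f

/-- `x = u⁻¹` as a two-variable series. -/
def Xv : MvPowerSeries (Fin 2) A := MvPowerSeries.X 0

/-- `y = v⁻¹` as a two-variable series. -/
def Yv : MvPowerSeries (Fin 2) A := MvPowerSeries.X 1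

/-- The left-hand side `(u²-v²)[s_{ij}(u), s_{kl}(v)]` of the quaternary relation,
multiplied by `x²y²` (where `x = u⁻¹`, `y = v⁻¹`) to clear negative powers. -/
def quatLHS {N : ℕ} (s : Fin N → Fin N → PowerSeries A) (i j k l : Fin N) :
    MvPowerSeries (Fin 2) A :=
  (Yv ^ 2 - Xv ^ 2) * ⁅inX (s i j), inY (s k l)⁆

/-- The right-hand side of the quaternary relation, multiplied by `x²y²`. -/
def quatRHS {N : ℕ} (s : Fin N → Fin N → PowerSeries A) (i j k l : Fin N) :
    MvPowerSeries (Fin 2) A :=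
  Xv * Yv * (Xv + Yv) * (inX (s k j) * inY (s i l) - inY (s k j) * inX (s i l))
    - Xv * Yv * (Yv - Xv) * (inX (s i k) * inY (s j l) - inY (s k i) * inX (s l j))
    + Xv ^ 2 * Yv ^ 2 * (inX (s k i) * inY (s j l) - inY (s k i) * inX (s j l))

/-- The quaternary relation (2.2). -/
def QuatRel {N : ℕ} (s : Fin N → Fin N → PowerSeries A) : Prop :=
  ∀ i j k l : Fin N, quatLHS s i j k l = quatRHS s i j k l

/-- `s_{ij}(u) = δ_{ij} + Σ_{r≥1} s_{ij}^{(r)} u^{-r}`. -/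
def HasDeltaConst {N : ℕ} (s : Fin N → Fin N → PowerSeries A) : Prop :=
  ∀ i j : Fin N, PowerSeries.constantCoeff (s i j) = if i = j then 1 else 0

/-- The symmetry relation `s_{ji}(-u) = s_{ij}(u) + (s_{ij}(u) - s_{ij}(-u))/(2u)`. -/
def SymRel {N : ℕ} (s : Fin N → Fin N → PowerSeries A) : Prop :=
  ∀ i j : Fin N,
    negVar (s j i)
      = s i j + (2 : ℂ)⁻¹ • (PowerSeries.X * (s i j - negVar (s i j)))

/-- The upper unitriangular matrix `E(u)` with entries `e_{ij}(u)`, `i < j`. -/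
def upperMat {N : ℕ} (e : Fin N → Fin N → PowerSeries A) :
    Matrix (Fin N) (Fin N) (PowerSeries A) :=
  Matrix.of fun i j => if i = j then 1 else if i < j then e i j else 0

/-- The lower unitriangular matrix `F(u)` with entries `f_{ji}(u)`, `i < j`. -/
def lowerMat {N : ℕ} (f : Fin N → Fin N → PowerSeries A) :
    Matrix (Fin N) (Fin N) (PowerSeries A) :=
  Matrix.of fun i j => if i = j then 1 else if j < i then f i j else 0

/-- The (unique) Gauss decomposition `S(u) = F(u) D(u) E(u)`: `D(u)` diagonal with
entries `d_i(u)` having constant term `1`, `E(u)` upper unitriangular with entries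
`e_{ij}(u)` (for `i < j`), `F(u)` lower unitriangular with entries `f_{ji}(u)`. -/
structure IsGaussDecomp {N : ℕ} (s : Fin N → Fin N → PowerSeries A)
    (d : Fin N → PowerSeries A) (e f : Fin N → Fin N → PowerSeries A) : Prop where
  d_const : ∀ i, PowerSeries.constantCoeff (d i) = 1
  e_const : ∀ i j : Fin N, i < j → PowerSeries.constantCoeff (e i j) = 0
  f_const : ∀ i j : Fin N, i < j → PowerSeries.constantCoeff (f j i) = 0
  decomp : Matrix.of s = lowerMat f * Matrix.diagonal d * upperMat e

/-- `b_{ji}(u) = f_{ji}(u - i/2)`; the indices `j i` here are 0-based, so the paper's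
(1-based) index `i` equals `(i : ℕ) + 1`. -/
def bSeriesAt {N : ℕ} (f : Fin N → Fin N → PowerSeries A) (j i : Fin N) :
    PowerSeries A :=
  shiftVar (-(((i : ℕ) : ℂ) + 1) / 2) (f j i)

/-- `h_0(u) = d_1(u)` and, for `k ≥ 1`, `h_k(u) = d̃_k(u - k/2) d_{k+1}(u - k/2)`;
the index `k` here is the paper's index, while the entries of `d`, `dt` are indexed
0-based (so the paper's `d_m` is `d ⟨m-1⟩`). -/
def hSeriesAt {N : ℕ} (d dt : Fin N → PowerSeries A) (k : Fin N) :
    PowerSeries A :=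
  if _h : (k : ℕ) = 0 then d k
  else
    shiftVar (-((k : ℕ) : ℂ) / 2) (dt ⟨(k : ℕ) - 1, by have := k.isLt; omega⟩) *
      shiftVar (-((k : ℕ) : ℂ) / 2) (d k)

/-- The free algebra on the generators `s_{ij}^{(r)}`, `r ≥ 1` (the triple
`(i, j, n)` encodes `s_{ij}^{(n+1)}`). -/
abbrev FA (N : ℕ) := FreeAlgebra ℂ (Fin N × Fin N × ℕ)

/-- The generating series `s_{ij}(u)` of the free algebra. -/
def sFree (N : ℕ) (i j : Fin N) : PowerSeries (FA N) :=
  PowerSeries.mk fun r =>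
    match r with
    | 0 => if i = j then 1 else 0
    | n + 1 => FreeAlgebra.ι ℂ (i, j, n)

/-- The defining relations of the extended twisted Yangian `X_N`: all coefficients
of the quaternary relations. -/
inductive XRel (N : ℕ) : FA N → FA N → Prop
  | quat (i j k l : Fin N) (m : Fin 2 →₀ ℕ) :
      XRel N (MvPowerSeries.coeff m (quatLHS (sFree N) i j k l))
        (MvPowerSeries.coeff m (quatRHS (sFree N) i j k l))

/-- The extended twisted Yangian `X_N`. -/
abbrev Xt (N : ℕ) := RingQuot (XRel N)

/-- The generating series `s_{ij}(u)` of `X_N`. -/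
def sX (N : ℕ) (i j : Fin N) : PowerSeries (Xt N) :=
  PowerSeries.map (RingQuot.mkRingHom (XRel N)) (sFree N i j)

/-- The defining relations of the twisted Yangian `Y_N`: the quaternary relations
together with the symmetry relation `s_{11}(u) = s_{11}(-u)`. -/
inductive YRel (N : ℕ) : FA N → FA N → Prop
  | quat (i j k l : Fin N) (m : Fin 2 →₀ ℕ) :
      YRel N (MvPowerSeries.coeff m (quatLHS (sFree N) i j k l))
        (MvPowerSeries.coeff m (quatRHS (sFree N) i j k l))
  | symm (h : 0 < N) (n : ℕ) :
      YRel N (PowerSeries.coeff n (sFree N ⟨0, h⟩ ⟨0, h⟩))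
        (PowerSeries.coeff n (negVar (sFree N ⟨0, h⟩ ⟨0, h⟩)))

/-- The twisted Yangian `Y_N`. -/
abbrev Yt (N : ℕ) := RingQuot (YRel N)

/-- The generating series `s_{ij}(u)` of `Y_N`. -/
def sY (N : ℕ) (i j : Fin N) : PowerSeries (Yt N) :=
  PowerSeries.map (RingQuot.mkRingHom (YRel N)) (sFree N i j)

/-- `x` is fixed by every (auto)morphism `ν_g : S(u) ↦ g(u) S(u)` of `Y_N`, where
`g(u) ∈ 1 + u⁻²ℂ[[u⁻²]]`. -/
def SYcond (N : ℕ) (x : Yt N) : Prop :=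
  ∀ (φ : Yt N →ₐ[ℂ] Yt N) (g : PowerSeries ℂ),
    PowerSeries.constantCoeff g = 1 →
    (∀ n : ℕ, PowerSeries.coeff (2 * n + 1) g = 0) →
    (∀ i j : Fin N,
      PowerSeries.map (φ : Yt N →+* Yt N) (sY N i j)
        = PowerSeries.map (algebraMap ℂ (Yt N)) g * sY N i j) →
    φ x = x

/-- The special twisted Yangian `SY_N`, as the subalgebra of `Y_N` of elements
stable under all automorphisms `ν_g`. -/
def specialSubalgebra (N : ℕ) : Subalgebra ℂ (Yt N) where
  carrier := {x | SYcond N x}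
  mul_mem' := fun ha hb φ g h1 h2 h3 => by
    rw [map_mul, ha φ g h1 h2 h3, hb φ g h1 h2 h3]
  one_mem' := fun φ _ _ _ _ => map_one φ
  add_mem' := fun ha hb φ g h1 h2 h3 => by
    rw [map_add, ha φ g h1 h2 h3, hb φ g h1 h2 h3]
  zero_mem' := fun φ _ _ _ _ => map_zero φ
  algebraMap_mem' := fun c φ _ _ _ _ => φ.commutes c

/-- `x < y` for an explicitly given linear order. -/
def ltOf {G : Type*} (L : LinearOrder G) (x y : G) : Prop :=
  L.toPartialOrder.toPreorder.toLT.lt x y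

/-- The ordered monomial attached to a finitely supported exponent function `m`,
with the generators multiplied in increasing order relative to the linear order
`L`. -/
def orderedMonomial {R : Type*} [Ring R] {G : Type*} (L : LinearOrder G)
    (elem : G → R) (m : G →₀ ℕ) : R :=
  letI := L
  ((m.support.sort (· ≤ ·)).map fun g => elem g ^ m g).prod

end TY

/-!
Put `x = u⁻¹`, `y = v⁻¹`. Since `S̃(v) = S(v)⁻¹`,
`[s_{ij}(u), s̃_{kl}(v)] = -Σ_{a,b} s̃_{ka}(v) [s_{ij}(u), s_{ab}(v)] s̃_{bl}(v)`.
Multiplying by the central element `y² - x²` and applying the quaternary relation to each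
bracket leaves six double sums. In each of them a row `s_{i·}(v)` or `s_{j·}(v)` meets the column
`s̃_{·l}(v)`, or a column `s_{·i}(v)` or `s_{·j}(v)` meets the row `s̃_{k·}(v)`, so it vanishes
because `{i, j} ∩ {k, l} = ∅`. Finally `y² - x²` is not a zero divisor on two-variable power
series over any ring, and the coefficients of the bracket are brackets of coefficients.
-/

namespace MvPowerSeries

variable {σ R : Type*} [Ring R]

theorem X_mem_center (s : σ) : X s ∈ Subring.center (MvPowerSeries σ R) :=
  Subring.mem_center_iff.2 fun f => (f.commute_X s).eq

theorem eq_zero_of_X_pow_sub_X_pow_mul_eq_zero {i j : σ} (hij : i ≠ j) {p : ℕ} (hp : 0 < p)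
    (q : ℕ) {f : MvPowerSeries σ R} (h : (X i ^ p - X j ^ q) * f = 0) : f = 0 := by
  classical
  have hcoeff (m : σ →₀ ℕ) : coeff (Finsupp.single j q + m) (X i ^ p * f)
      = coeff (Finsupp.single j q + m) (X j ^ q * f) := by
    rw [← sub_eq_zero, ← map_sub, ← sub_mul, h, map_zero]
  have hshift (m : σ →₀ ℕ) :
      coeff (Finsupp.single i p + m) f = coeff (Finsupp.single j q + m) f := by
    have := hcoeff (Finsupp.single i p + m)
    rw [add_left_comm, X_pow_eq, X_pow_eq, coeff_add_monomial_mul, add_left_comm,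
      coeff_add_monomial_mul, one_mul, one_mul] at this
    exact this.symm
  have hsmall (m : σ →₀ ℕ) (hm : m i < p) : coeff m f = 0 := by
    have := hcoeff m
    rwa [X_pow_eq, X_pow_eq, coeff_add_monomial_mul, coeff_monomial_mul, if_neg, one_mul,
      eq_comm] at this
    simp [Finsupp.single_le_iff, hij.symm, hm]
  suffices ∀ n m, m i = n → coeff m f = 0 from ext fun m => (this _ m rfl).trans (map_zero _).symm
  intro n
  induction n using Nat.strong_induction_on with
  | _ n ih =>
    intro m hm
    by_cases hlt : m i < p
    · exact hsmall m hlt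
    · obtain ⟨m', rfl⟩ : ∃ m', m = Finsupp.single i p + m' :=
        ⟨m - Finsupp.single i p, (add_tsub_cancel_of_le (by simpa using hlt)).symm⟩
      rw [hshift]
      exact ih _ (by simpa [← hm, Finsupp.single_apply, hij.symm] using hp) _ rfl

end MvPowerSeries

namespace Matrix

variable {n R : Type*} [Fintype n] [Ring R]

theorem sum_sum_mul_mul_mul_of_mem_center (T : Matrix n n R) {c : R} (hc : c ∈ Set.center R)
    (P Q : n → R) (k l : n) :
    ∑ a, ∑ b, T k a * (c * (P a * Q b)) * T b l = c * ((T *ᵥ P) k * (Q ᵥ* T) l) := by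
  rw [mulVec, vecMul, dotProduct, dotProduct, Finset.sum_mul_sum, Finset.mul_sum]
  refine Finset.sum_congr rfl fun a _ => ?_
  rw [Finset.mul_sum]
  refine Finset.sum_congr rfl fun b _ => ?_
  simp only [mul_assoc]
  exact ((hc.comm _).left_comm _).symm

variable [DecidableEq n] {S T : Matrix n n R}

theorem lie_apply_of_mul_eq_one (hST : S * T = 1) (hTS : T * S = 1) (x : R) (k l : n) :
    ⁅x, T k l⁆ = -∑ a, ∑ b, T k a * ⁅x, S a b⁆ * T b l := by
  have hright (a : n) : ∑ b, T k a * (x * S a b) * T b l = T k a * x * (1 : Matrix n n R) a l := by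
    simp only [← hST, mul_apply, Finset.mul_sum, mul_assoc]
  have hleft (b : n) : ∑ a, T k a * (S a b * x) * T b l = (1 : Matrix n n R) k b * x * T b l := by
    simp only [← hTS, mul_apply, Finset.sum_mul, mul_assoc]
  simp only [Ring.lie_def, mul_sub, sub_mul, Finset.sum_sub_distrib, hright]
  rw [Finset.sum_comm, Finset.sum_congr rfl fun b _ => hleft b]
  simp [one_apply]

theorem sum_sum_mul_mul_row_mul_eq_zero (hST : S * T = 1) {c : R} (hc : c ∈ Set.center R)
    (P : n → R) {i l : n} (hil : i ≠ l) (k : n) :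
    ∑ a, ∑ b, T k a * (c * (P a * S i b)) * T b l = 0 := by
  simp only [sum_sum_mul_mul_mul_of_mem_center T hc, vecMul, dotProduct, ← mul_apply, hST,
    one_apply_ne hil, mul_zero]

theorem sum_sum_mul_mul_col_mul_eq_zero (hTS : T * S = 1) {c : R} (hc : c ∈ Set.center R)
    (Q : n → R) {j k : n} (hjk : j ≠ k) (l : n) :
    ∑ a, ∑ b, T k a * (c * (S a j * Q b)) * T b l = 0 := by
  simp only [sum_sum_mul_mul_mul_of_mem_center T hc, mulVec, dotProduct, ← mul_apply, hTS,
    one_apply_ne hjk.symm, zero_mul, mul_zero]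

end Matrix

namespace TY

variable {A : Type*} [Ring A]

open Classical in
theorem coeff_inVar (k : Fin 2) (f : PowerSeries A) (m : Fin 2 →₀ ℕ) :
    MvPowerSeries.coeff m (inVar k f)
      = if m = Finsupp.single k (m k) then PowerSeries.coeff (m k) f else 0 :=
  rfl

theorem coeff_single_inVar (k : Fin 2) (f : PowerSeries A) (n : ℕ) :
    MvPowerSeries.coeff (Finsupp.single k n) (inVar k f) = PowerSeries.coeff n f := by
  simp [coeff_inVar]

theorem inVar_one (k : Fin 2) : inVar k (1 : PowerSeries A) = 1 := by
  classical
  ext m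
  rw [coeff_inVar, MvPowerSeries.coeff_one, PowerSeries.coeff_one]
  by_cases hm : m = Finsupp.single k (m k)
  · rw [if_pos hm]
    conv_rhs => rw [hm]
    simp
  · rw [if_neg hm, if_neg]
    rintro rfl
    exact hm (by simp)

theorem inVar_add (k : Fin 2) (f g : PowerSeries A) :
    inVar k (f + g) = inVar k f + inVar k g := by
  ext m
  simp only [coeff_inVar, map_add]
  split_ifs <;> simp

theorem inVar_mul (k : Fin 2) (f g : PowerSeries A) :
    inVar k (f * g) = inVar k f * inVar k g := by
  classical
  ext m
  rw [MvPowerSeries.coeff_mul, coeff_inVar]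
  split_ifs with hm
  · rw [PowerSeries.coeff_mul]
    conv_rhs => rw [hm, Finsupp.antidiagonal_single, Finset.sum_map]
    simp [coeff_single_inVar]
  · refine (Finset.sum_eq_zero fun p hp => ?_).symm
    rw [coeff_inVar, coeff_inVar]
    split_ifs with h1 h2
    · rw [Finset.HasAntidiagonal.mem_antidiagonal] at hp
      refine absurd ?_ hm
      rw [← hp, h1, h2]
      simp
    all_goals simp

theorem map_inVar {B : Type*} [Ring B] (φ : A →+* B) (k : Fin 2) (f : PowerSeries A) :
    MvPowerSeries.map φ (inVar k f) = inVar k (PowerSeries.map φ f) := by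
  ext m
  simp only [MvPowerSeries.coeff_map, coeff_inVar, PowerSeries.coeff_map]
  split_ifs <;> simp

theorem coeff_inVar_mul_inVar {k k' : Fin 2} (hkk : k ≠ k') (f g : PowerSeries A) (m n : ℕ) :
    MvPowerSeries.coeff (Finsupp.single k m + Finsupp.single k' n) (inVar k f * inVar k' g)
      = PowerSeries.coeff m f * PowerSeries.coeff n g := by
  classical
  rw [MvPowerSeries.coeff_mul, Finset.sum_eq_single (Finsupp.single k m, Finsupp.single k' n),
    coeff_single_inVar, coeff_single_inVar]
  · rintro ⟨p, q⟩ hpq hne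
    rw [Finset.HasAntidiagonal.mem_antidiagonal] at hpq
    dsimp only at hpq ⊢
    rw [coeff_inVar, coeff_inVar]
    split_ifs with hp hq
    · refine absurd ?_ hne
      rw [hp, hq] at hpq
      have hk := congrArg (· k) hpq
      have hk' := congrArg (· k') hpq
      simp [hkk, hkk.symm] at hk hk'
      rw [hp, hq, hk, hk']
    all_goals simp
  · simp

def inVarHom (k : Fin 2) : PowerSeries A →+* MvPowerSeries (Fin 2) A where
  toFun := inVar k
  map_one' := inVar_one k
  map_mul' := inVar_mul k
  map_zero' := by ext m; simp [coeff_inVar]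
  map_add' := inVar_add k

theorem map_quatLHS {B : Type*} [Ring B] (φ : A →+* B) {N : ℕ}
    (s : Fin N → Fin N → PowerSeries A) (i j k l : Fin N) :
    MvPowerSeries.map φ (quatLHS s i j k l)
      = quatLHS (fun a b => PowerSeries.map φ (s a b)) i j k l := by
  simp only [quatLHS, Xv, Yv, Ring.lie_def, map_sub, map_mul, map_pow, MvPowerSeries.map_X,
    map_inVar]

theorem map_quatRHS {B : Type*} [Ring B] (φ : A →+* B) {N : ℕ}
    (s : Fin N → Fin N → PowerSeries A) (i j k l : Fin N) :
    MvPowerSeries.map φ (quatRHS s i j k l)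
      = quatRHS (fun a b => PowerSeries.map φ (s a b)) i j k l := by
  simp only [quatRHS, Xv, Yv, map_sub, map_add, map_mul, map_pow, MvPowerSeries.map_X, map_inVar]

theorem quatRel_sY (N : ℕ) : QuatRel (sY N) := by
  intro i j k l
  ext m
  have := RingQuot.mkRingHom_rel (YRel.quat i j k l m)
  rwa [← MvPowerSeries.coeff_map, ← MvPowerSeries.coeff_map, map_quatLHS, map_quatRHS] at this

theorem sum_sum_inY_mul_quatRHS_mul_inY_eq_zero {N : ℕ}
    {S T : Matrix (Fin N) (Fin N) (PowerSeries A)} (hST : S * T = 1) (hTS : T * S = 1)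
    {i j k l : Fin N} (hik : i ≠ k) (hil : i ≠ l) (hjk : j ≠ k) (hjl : j ≠ l) :
    ∑ a, ∑ b, inY (T k a) * quatRHS S i j a b * inY (T b l) = 0 := by
  set Sy := (inVarHom 1).mapMatrix S
  set Ty := (inVarHom 1).mapMatrix T
  have hSTy : Sy * Ty = 1 := by rw [← map_mul, hST, map_one]
  have hTSy : Ty * Sy = 1 := by rw [← map_mul, hTS, map_one]
  set c₁ : MvPowerSeries (Fin 2) A := Xv * Yv * (Xv + Yv)
  set c₂ : MvPowerSeries (Fin 2) A := Xv * Yv * (Yv - Xv)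
  set c₃ : MvPowerSeries (Fin 2) A := Xv ^ 2 * Yv ^ 2
  have hX := MvPowerSeries.X_mem_center (σ := Fin 2) (R := A)
  have hc₁ : c₁ ∈ Set.center _ := mul_mem (mul_mem (hX 0) (hX 1)) (add_mem (hX 0) (hX 1))
  have hc₂ : c₂ ∈ Set.center _ := mul_mem (mul_mem (hX 0) (hX 1)) (sub_mem (hX 1) (hX 0))
  have hc₃ : c₃ ∈ Set.center _ := mul_mem (pow_mem (hX 0) 2) (pow_mem (hX 1) 2)
  have hrhs (a b : Fin N) : quatRHS S i j a b
      = c₁ * (inX (S a j) * Sy i b) - c₁ * (Sy a j * inX (S i b))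
        - (c₂ * (inX (S i a) * Sy j b) - c₂ * (Sy a i * inX (S b j)))
        + (c₃ * (inX (S a i) * Sy j b) - c₃ * (Sy a i * inX (S j b))) := by
    rw [← mul_sub c₁, ← mul_sub c₂, ← mul_sub c₃]
    rfl
  change ∑ a, ∑ b, Ty k a * quatRHS S i j a b * Ty b l = 0
  simp only [hrhs, mul_sub, sub_mul, mul_add, add_mul, Finset.sum_sub_distrib,
    Finset.sum_add_distrib]
  rw [Matrix.sum_sum_mul_mul_row_mul_eq_zero hSTy hc₁ _ hil,
    Matrix.sum_sum_mul_mul_col_mul_eq_zero hTSy hc₁ _ hjk,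
    Matrix.sum_sum_mul_mul_row_mul_eq_zero hSTy hc₂ _ hjl,
    Matrix.sum_sum_mul_mul_col_mul_eq_zero hTSy hc₂ _ hik,
    Matrix.sum_sum_mul_mul_row_mul_eq_zero hSTy hc₃ _ hjl,
    Matrix.sum_sum_mul_mul_col_mul_eq_zero hTSy hc₃ _ hik]
  simp

theorem commute_inX_inY_of_quatRel {N : ℕ} {S T : Matrix (Fin N) (Fin N) (PowerSeries A)}
    (hS : QuatRel S) (hST : S * T = 1) (hTS : T * S = 1) {i j k l : Fin N}
    (hik : i ≠ k) (hil : i ≠ l) (hjk : j ≠ k) (hjl : j ≠ l) :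
    Commute (inX (S i j)) (inY (T k l)) := by
  set Sy := (inVarHom 1).mapMatrix S
  set Ty := (inVarHom 1).mapMatrix T
  set z : MvPowerSeries (Fin 2) A := Yv ^ 2 - Xv ^ 2
  have hz : z ∈ Set.center _ := sub_mem (pow_mem (MvPowerSeries.X_mem_center 1) 2)
    (pow_mem (MvPowerSeries.X_mem_center 0) 2)
  refine sub_eq_zero.1 (MvPowerSeries.eq_zero_of_X_pow_sub_X_pow_mul_eq_zero
    (i := 1) (j := 0) (by decide) two_pos 2 ?_)
  change z * ⁅inX (S i j), Ty k l⁆ = 0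
  rw [Matrix.lie_apply_of_mul_eq_one (S := Sy) (by rw [← map_mul, hST, map_one])
    (by rw [← map_mul, hTS, map_one]), mul_neg, neg_eq_zero, Finset.mul_sum]
  calc ∑ a, z * ∑ b, Ty k a * ⁅inX (S i j), Sy a b⁆ * Ty b l
      = ∑ a, ∑ b, Ty k a * quatRHS S i j a b * Ty b l := by
        refine Finset.sum_congr rfl fun a _ => ?_
        rw [Finset.mul_sum]
        refine Finset.sum_congr rfl fun b _ => ?_
        simp only [← hS i j a b, quatLHS, mul_assoc]
        exact (hz.comm _).left_comm _
    _ = 0 := sum_sum_inY_mul_quatRHS_mul_inY_eq_zero hST hTS hik hil hjk hjl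

theorem statement_1 (N : ℕ)
    (St : Matrix (Fin N) (Fin N) (PowerSeries (Yt N)))
    (hSt1 : Matrix.of (sY N) * St = 1) (hSt2 : St * Matrix.of (sY N) = 1)
    (i j k l : Fin N) (hik : i ≠ k) (hil : i ≠ l) (hjk : j ≠ k) (hjl : j ≠ l) :
    ∀ m n : ℕ,
      Commute (PowerSeries.coeff m (sY N i j))
        (PowerSeries.coeff n (St k l)) := by
  intro m n
  have key := congrArg (MvPowerSeries.coeff (Finsupp.single 0 m + Finsupp.single 1 n))
    (commute_inX_inY_of_quatRel (quatRel_sY N) hSt1 hSt2 hik hil hjk hjl).eq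
  rwa [coeff_inVar_mul_inVar (by decide), add_comm, coeff_inVar_mul_inVar (by decide)] at key

end TY
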